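/- arXiv:1207.3265 — 3 statements merged into one kernel-verified Lean document; each statement's English description precedes it below -/
import Mathlib

section
/- Suppose θ–W–(X,Y) and θ–T(W)–W are Markov chains, X and Y are conditionally independent given T(W), and T_x(X) is locally sufficient for T(W) given X (T(W)–T_x(X)–X is a Markov chain) and T_y(Y) is locally sufficient for T(W) given Y (T(W)–T_y(Y)–Y is a Markov chain). Then (T_x(X), T_y(Y)) is globally sufficient for θ: θ–(T_x(X),T_y(Y))–(X,Y) is a Markov chain. -/
/-!
Write `τ = T(W)`. Since `τ` is a function of `W`, the chains `θ – W – (X,Y)` and `θ – τ – W`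
contract to `θ – τ – (X,Y)`. Conditional independence of `X` and `Y` given `τ` makes the joint law
of `(τ, X, Y)` factor through the two local laws, so the two local sufficiency statements combine
into `τ – (T_x(X), T_y(Y)) – (X,Y)`. Finally, a statistic of `(X,Y)` that is sufficient for the
middle variable `τ` of the chain `θ – τ – (X,Y)` is sufficient for `θ`: the posterior of `θ`
given `(X,Y)` is an average of posteriors given `τ` against the law of `τ` given `(X,Y)`, and
the latter depends on `(X,Y)` only through the statistic.
-/

open scoped Classical BigOperators

/-- Probability of a set of outcomes under a pmf `p` on a finite sample space. -/
noncomputable def pr {Ω : Type*} [Fintype Ω] (p : Ω → ℝ) (s : Set Ω) : ℝ :=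
  ∑ ω, if ω ∈ s then p ω else 0

/-- `p` is a probability mass function on the finite sample space `Ω`. -/
def IsPMF {Ω : Type*} [Fintype Ω] (p : Ω → ℝ) : Prop :=
  (∀ ω, 0 ≤ p ω) ∧ (∑ ω, p ω) = 1

/-- The Markov chain `A – B – C`: `A` and `C` are conditionally independent given `B`. -/
def MarkovChain {Ω α β γ : Type*} [Fintype Ω] (p : Ω → ℝ)
    (A : Ω → α) (B : Ω → β) (C : Ω → γ) : Prop :=
  ∀ (a : α) (b : β) (c : γ),
    pr p {ω | A ω = a ∧ B ω = b ∧ C ω = c} * pr p {ω | B ω = b} =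
      pr p {ω | A ω = a ∧ B ω = b} * pr p {ω | B ω = b ∧ C ω = c}

section

variable {Ω α β γ δ : Type*} [Fintype Ω] {p : Ω → ℝ}

theorem pr_mono (hp : ∀ ω, 0 ≤ p ω) {s t : Set Ω} (h : s ⊆ t) : pr p s ≤ pr p t := by
  unfold pr
  gcongr with ω
  split_ifs with hs ht <;> first | exact le_rfl | exact hp ω | exact absurd (h hs) ht

theorem pr_eq_zero_of_subset (hp : ∀ ω, 0 ≤ p ω) {s t : Set Ω} (h : s ⊆ t) (ht : pr p t = 0) :
    pr p s = 0 :=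
  le_antisymm (ht ▸ pr_mono hp h) (Finset.sum_nonneg fun ω _ => by split_ifs <;> simp [hp ω])

theorem pr_eq_sum_fiber (f : Ω → β) (S : Finset β) {s : Set Ω} {t : β → Set Ω}
    (hS : ∀ ω ∈ s, f ω ∈ S) (ht : ∀ b ∈ S, ∀ ω, ω ∈ t b ↔ ω ∈ s ∧ f ω = b) :
    pr p s = ∑ b ∈ S, pr p (t b) := by
  unfold pr
  rw [Finset.sum_comm]
  refine Finset.sum_congr rfl fun ω _ => ?_
  by_cases hω : ω ∈ s
  · simp +contextual [ht, hω, hS ω hω]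
  · simp +contextual [ht, hω]

theorem pr_eq_sum_image (f : Ω → β) {s : Set Ω} {t : β → Set Ω}
    (ht : ∀ b ω, ω ∈ t b ↔ ω ∈ s ∧ f ω = b) :
    pr p s = ∑ b ∈ Finset.univ.image f, pr p (t b) :=
  pr_eq_sum_fiber f _ (fun ω _ => Finset.mem_image_of_mem f (Finset.mem_univ ω)) fun b _ => ht b

theorem markovChain_comp_iff {A : Ω → α} {C : Ω → γ} (g : γ → β) :
    MarkovChain p A (fun ω => g (C ω)) C ↔ ∀ a c,
      pr p {ω | A ω = a ∧ C ω = c} * pr p {ω | g (C ω) = g c} =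
        pr p {ω | A ω = a ∧ g (C ω) = g c} * pr p {ω | C ω = c} := by
  have hABC : ∀ a c, {ω | A ω = a ∧ g (C ω) = g c ∧ C ω = c} = {ω | A ω = a ∧ C ω = c} :=
    fun a c => by ext; grind
  have hBC : ∀ c, {ω | g (C ω) = g c ∧ C ω = c} = {ω | C ω = c} := fun c => by ext; grind
  refine ⟨fun h a c => ?_, fun h a b c => ?_⟩
  · simpa only [hABC, hBC] using h a (g c) c
  · beta_reduce
    by_cases hb : g c = b
    · subst hb
      rw [hABC, hBC]
      exact h a c
    · have hABC' : {ω | A ω = a ∧ g (C ω) = b ∧ C ω = c} = ∅ := by ext; grind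
      have hBC' : {ω | g (C ω) = b ∧ C ω = c} = ∅ := by ext; grind
      simp [hABC', hBC', pr]

namespace MarkovChain

variable {A : Ω → α} {B : Ω → β} {C : Ω → γ}

theorem symm (h : MarkovChain p A B C) : MarkovChain p C B A := by
  intro c b a
  have hCBA : {ω | C ω = c ∧ B ω = b ∧ A ω = a} = {ω | A ω = a ∧ B ω = b ∧ C ω = c} := by
    ext; grind
  have hCB : {ω | C ω = c ∧ B ω = b} = {ω | B ω = b ∧ C ω = c} := by ext; grind
  have hBA : {ω | B ω = b ∧ A ω = a} = {ω | A ω = a ∧ B ω = b} := by ext; grind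
  rw [hCBA, hCB, hBA, h a b c, mul_comm]

theorem comp_right (h : MarkovChain p A B C) (g : γ → δ) :
    MarkovChain p A B (fun ω => g (C ω)) := by
  intro a b d
  set S := (Finset.univ.image C).filter (fun c => g c = d)
  have hS : ∀ ω, g (C ω) = d → C ω ∈ S := by simp [S]
  have hABC : pr p {ω | A ω = a ∧ B ω = b ∧ g (C ω) = d} =
      ∑ c ∈ S, pr p {ω | A ω = a ∧ B ω = b ∧ C ω = c} :=
    pr_eq_sum_fiber C S (fun ω hω => hS ω hω.2.2) fun c hc ω => by grind
  have hBC : pr p {ω | B ω = b ∧ g (C ω) = d} = ∑ c ∈ S, pr p {ω | B ω = b ∧ C ω = c} :=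
    pr_eq_sum_fiber C S (fun ω hω => hS ω hω.2) fun c hc ω => by grind
  simp only [hABC, hBC, Finset.sum_mul, Finset.mul_sum]
  exact Finset.sum_congr rfl fun c _ => h a b c

theorem mul_eq_given_first (h : MarkovChain p A B C) (a : α) (b : β) (c : γ) :
    pr p {ω | B ω = b ∧ A ω = a ∧ C ω = c} * pr p {ω | B ω = b} =
      pr p {ω | B ω = b ∧ A ω = a} * pr p {ω | B ω = b ∧ C ω = c} := by
  have hBAC : {ω | B ω = b ∧ A ω = a ∧ C ω = c} = {ω | A ω = a ∧ B ω = b ∧ C ω = c} := by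
    ext; grind
  have hBA : {ω | B ω = b ∧ A ω = a} = {ω | A ω = a ∧ B ω = b} := by ext; grind
  rw [hBAC, hBA, h a b c]

theorem contraction (hp : ∀ ω, 0 ≤ p ω) {g : β → δ} (h1 : MarkovChain p A B C)
    (h2 : MarkovChain p A (fun ω => g (B ω)) B) : MarkovChain p A (fun ω => g (B ω)) C := by
  intro a t c
  beta_reduce
  set S := (Finset.univ.image B).filter (fun b => g b = t)
  have hS : ∀ ω, g (B ω) = t → B ω ∈ S := by simp [S]
  have hdS : ∀ b ∈ S, g b = t := fun b hb => (Finset.mem_filter.1 hb).2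
  have hfiber : ∀ b ∈ S, pr p {ω | A ω = a ∧ B ω = b ∧ C ω = c} * pr p {ω | g (B ω) = t} =
      pr p {ω | A ω = a ∧ g (B ω) = t} * pr p {ω | B ω = b ∧ C ω = c} := by
    intro b hb
    obtain rfl := hdS b hb
    by_cases hb0 : pr p {ω | B ω = b} = 0
    · have hABC : pr p {ω | A ω = a ∧ B ω = b ∧ C ω = c} = 0 :=
        pr_eq_zero_of_subset hp (fun ω hω => hω.2.1) hb0
      have hBC : pr p {ω | B ω = b ∧ C ω = c} = 0 :=
        pr_eq_zero_of_subset hp (fun ω hω => hω.1) hb0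
      rw [hABC, hBC, zero_mul, mul_zero]
    · apply mul_right_cancel₀ hb0
      linear_combination pr p {ω | g (B ω) = g b} * h1 a b c +
        pr p {ω | B ω = b ∧ C ω = c} * (markovChain_comp_iff g).1 h2 a b
  have hABC : pr p {ω | A ω = a ∧ g (B ω) = t ∧ C ω = c} =
      ∑ b ∈ S, pr p {ω | A ω = a ∧ B ω = b ∧ C ω = c} :=
    pr_eq_sum_fiber B S (fun ω hω => hS ω hω.2.1) fun b hb ω => by grind
  have hBC : pr p {ω | g (B ω) = t ∧ C ω = c} = ∑ b ∈ S, pr p {ω | B ω = b ∧ C ω = c} :=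
    pr_eq_sum_fiber B S (fun ω hω => hS ω hω.1) fun b hb ω => by grind
  rw [hABC, hBC, Finset.sum_mul, Finset.mul_sum]
  exact Finset.sum_congr rfl hfiber

theorem trans_sufficient (hp : ∀ ω, 0 ≤ p ω) {g : γ → δ} (h1 : MarkovChain p A B C)
    (h2 : MarkovChain p B (fun ω => g (C ω)) C) : MarkovChain p A (fun ω => g (C ω)) C := by
  refine (markovChain_comp_iff g).2 fun a c => ?_
  have hfiber : ∀ b, pr p {ω | A ω = a ∧ B ω = b ∧ C ω = c} * pr p {ω | g (C ω) = g c} =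
      pr p {ω | A ω = a ∧ B ω = b ∧ g (C ω) = g c} * pr p {ω | C ω = c} := by
    intro b
    by_cases hb0 : pr p {ω | B ω = b} = 0
    · have hABC : pr p {ω | A ω = a ∧ B ω = b ∧ C ω = c} = 0 :=
        pr_eq_zero_of_subset hp (fun ω hω => hω.2.1) hb0
      have hABgC : pr p {ω | A ω = a ∧ B ω = b ∧ g (C ω) = g c} = 0 :=
        pr_eq_zero_of_subset hp (fun ω hω => hω.2.1) hb0
      rw [hABC, hABgC, zero_mul, zero_mul]
    · apply mul_right_cancel₀ hb0
      linear_combination pr p {ω | g (C ω) = g c} * h1 a b c +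
        pr p {ω | A ω = a ∧ B ω = b} * (markovChain_comp_iff g).1 h2 b c -
        pr p {ω | C ω = c} * h1.comp_right g a b (g c)
  have hAC : pr p {ω | A ω = a ∧ C ω = c} =
      ∑ b ∈ Finset.univ.image B, pr p {ω | A ω = a ∧ B ω = b ∧ C ω = c} :=
    pr_eq_sum_image B fun b ω => by grind
  have hAgC : pr p {ω | A ω = a ∧ g (C ω) = g c} =
      ∑ b ∈ Finset.univ.image B, pr p {ω | A ω = a ∧ B ω = b ∧ g (C ω) = g c} :=
    pr_eq_sum_image B fun b ω => by grind
  rw [hAC, hAgC, Finset.sum_mul, Finset.sum_mul]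
  exact Finset.sum_congr rfl fun b _ => hfiber b

theorem factorization {X : Ω → α} {Y : Ω → γ} {α' γ' : Type*} {f : α → α'} {g : γ → γ'}
    (hp : ∀ ω, 0 ≤ p ω) (hXY : MarkovChain p X B Y)
    (hX : MarkovChain p B (fun ω => f (X ω)) X) (hY : MarkovChain p B (fun ω => g (Y ω)) Y)
    (b : β) (x : α) (y : γ) :
    pr p {ω | B ω = b ∧ X ω = x ∧ Y ω = y} *
        (pr p {ω | f (X ω) = f x} * pr p {ω | g (Y ω) = g y}) =
      pr p {ω | B ω = b ∧ f (X ω) = f x ∧ g (Y ω) = g y} *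
        (pr p {ω | X ω = x} * pr p {ω | Y ω = y}) := by
  by_cases hb0 : pr p {ω | B ω = b} = 0
  · have hBXY : pr p {ω | B ω = b ∧ X ω = x ∧ Y ω = y} = 0 :=
      pr_eq_zero_of_subset hp (fun ω hω => hω.1) hb0
    have hBfg : pr p {ω | B ω = b ∧ f (X ω) = f x ∧ g (Y ω) = g y} = 0 :=
      pr_eq_zero_of_subset hp (fun ω hω => hω.1) hb0
    rw [hBXY, hBfg, zero_mul, zero_mul]
  · apply mul_right_cancel₀ hb0
    linear_combination
      pr p {ω | f (X ω) = f x} * pr p {ω | g (Y ω) = g y} * hXY.mul_eq_given_first x b y +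
      pr p {ω | B ω = b ∧ Y ω = y} * pr p {ω | g (Y ω) = g y} *
        (markovChain_comp_iff f).1 hX b x +
      pr p {ω | B ω = b ∧ f (X ω) = f x} * pr p {ω | X ω = x} *
        (markovChain_comp_iff g).1 hY b y -
      pr p {ω | X ω = x} * pr p {ω | Y ω = y} *
        ((hXY.comp_right g).symm.comp_right f).symm.mul_eq_given_first (f x) b (g y)

theorem prodMap {X : Ω → α} {Y : Ω → γ} {α' γ' : Type*} {f : α → α'} {g : γ → γ'}
    (hp : ∀ ω, 0 ≤ p ω) (hXY : MarkovChain p X B Y)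
    (hX : MarkovChain p B (fun ω => f (X ω)) X) (hY : MarkovChain p B (fun ω => g (Y ω)) Y) :
    MarkovChain p B (fun ω => Prod.map f g (X ω, Y ω)) (fun ω => (X ω, Y ω)) := by
  refine (markovChain_comp_iff (Prod.map f g)).2 ?_
  rintro b ⟨x, y⟩
  simp only [Prod.map_apply, Prod.mk.injEq]
  have hfactor := hXY.factorization hp hX hY
  have hXY_sum : pr p {ω | X ω = x ∧ Y ω = y} =
      ∑ b ∈ Finset.univ.image B, pr p {ω | B ω = b ∧ X ω = x ∧ Y ω = y} :=
    pr_eq_sum_image B fun b ω => by grind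
  have hfg_sum : pr p {ω | f (X ω) = f x ∧ g (Y ω) = g y} =
      ∑ b ∈ Finset.univ.image B, pr p {ω | B ω = b ∧ f (X ω) = f x ∧ g (Y ω) = g y} :=
    pr_eq_sum_image B fun b ω => by grind
  have hmarginal : pr p {ω | X ω = x ∧ Y ω = y} *
        (pr p {ω | f (X ω) = f x} * pr p {ω | g (Y ω) = g y}) =
      pr p {ω | f (X ω) = f x ∧ g (Y ω) = g y} * (pr p {ω | X ω = x} * pr p {ω | Y ω = y}) := by
    rw [hXY_sum, hfg_sum, Finset.sum_mul, Finset.sum_mul]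
    exact Finset.sum_congr rfl fun b _ => hfactor b x y
  by_cases hfg0 : pr p {ω | f (X ω) = f x} * pr p {ω | g (Y ω) = g y} = 0
  · have hfg : pr p {ω | f (X ω) = f x ∧ g (Y ω) = g y} = 0 := by
      rcases mul_eq_zero.1 hfg0 with h | h
      exacts [pr_eq_zero_of_subset hp (fun ω hω => hω.1) h,
        pr_eq_zero_of_subset hp (fun ω hω => hω.2) h]
    have hBfg : pr p {ω | B ω = b ∧ f (X ω) = f x ∧ g (Y ω) = g y} = 0 :=
      pr_eq_zero_of_subset hp (fun ω hω => hω.2) hfg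
    rw [hfg, hBfg, zero_mul, mul_zero]
  · apply mul_right_cancel₀ hfg0
    linear_combination pr p {ω | f (X ω) = f x ∧ g (Y ω) = g y} * hfactor b x y -
      pr p {ω | B ω = b ∧ f (X ω) = f x ∧ g (Y ω) = g y} * hmarginal

end MarkovChain

end

/-- Theorem 1, part 2: if `θ – W – (X,Y)` and `θ – T(W) – W` are Markov chains, `X` and `Y` are
conditionally independent given `T(W)`, and `T_x(X)`, `T_y(Y)` are locally sufficient for `T(W)`,
then `(T_x(X), T_y(Y))` is globally sufficient for `θ`. -/
theorem local_sufficiency_implies_global_HCI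
    {Ω Θ 𝒲 𝒳 𝒴 𝒯 T₁ T₂ : Type*} [Fintype Ω]
    (p : Ω → ℝ) (hp : IsPMF p)
    (θ : Ω → Θ) (W : Ω → 𝒲) (X : Ω → 𝒳) (Y : Ω → 𝒴)
    (T : 𝒲 → 𝒯) (Tx : 𝒳 → T₁) (Ty : 𝒴 → T₂)
    (h1 : MarkovChain p θ W (fun ω => (X ω, Y ω)))
    (h2 : MarkovChain p θ (fun ω => T (W ω)) W)
    (hci : MarkovChain p X (fun ω => T (W ω)) Y)
    (hlx : MarkovChain p (fun ω => T (W ω)) (fun ω => Tx (X ω)) X)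
    (hly : MarkovChain p (fun ω => T (W ω)) (fun ω => Ty (Y ω)) Y) :
    MarkovChain p θ (fun ω => (Tx (X ω), Ty (Y ω))) (fun ω => (X ω, Y ω)) := by
  have hθ : MarkovChain p θ (fun ω => T (W ω)) (fun ω => (X ω, Y ω)) := h1.contraction hp.1 h2
  have hsuff : MarkovChain p (fun ω => T (W ω)) (fun ω => (Tx (X ω), Ty (Y ω)))
      (fun ω => (X ω, Y ω)) := hci.prodMap hp.1 hlx hly
  exact hθ.trans_sufficient (g := Prod.map Tx Ty) hp.1 hsuff
end

section
/- Let (X,Y) have joint pmf p(x,y|θ) with T_y(Y) locally sufficient for θ. Then (T_x(X), T_y(Y)) is globally sufficient for θ if and only if there exist functions g(t₁|t₂,θ) and h(x,y) such that for all (x,y) and all θ, p(x|y,θ) = g(T_x(x)|T_y(y),θ)·h(x,y). -/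
open scoped Classical BigOperators

/-- Nonnegativity is what makes this hold when the sum vanishes (where `x / 0 = 0`). -/
theorem div_sum_mul_sum_of_nonneg {ι : Type*} [Fintype ι] {f : ι → ℝ} (hf : ∀ i, 0 ≤ f i)
    (i : ι) : f i / (∑ j, f j) * ∑ j, f j = f i := by
  by_cases hS : ∑ j, f j = 0
  · rw [hS, mul_zero, ((Finset.sum_eq_zero_iff_of_nonneg fun j _ => hf j).mp hS i
      (Finset.mem_univ i))]
  · exact div_mul_cancel₀ (f i) hS

theorem global_sufficiency_iff_conditional_factorization_general
    {Θ 𝒳 𝒴 T₁ T₂ : Type*} [Fintype 𝒳] [Fintype 𝒴]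
    (p : Θ → 𝒳 → 𝒴 → ℝ)
    (hpos : ∀ θ x y, 0 ≤ p θ x y)
    (Tx : 𝒳 → T₁) (Ty : 𝒴 → T₂)
    (hloc : ∃ (g : T₂ → Θ → ℝ) (h : 𝒴 → ℝ), ∀ θ y, (∑ x, p θ x y) = g (Ty y) θ * h y) :
    (∃ (G : T₁ → T₂ → Θ → ℝ) (H : 𝒳 → 𝒴 → ℝ),
        ∀ θ x y, p θ x y = G (Tx x) (Ty y) θ * H x y) ↔
      (∃ (g : T₁ → T₂ → Θ → ℝ) (h : 𝒳 → 𝒴 → ℝ),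
        ∀ θ x y, p θ x y / (∑ x', p θ x' y) = g (Tx x) (Ty y) θ * h x y) := by
  obtain ⟨gY, hY, hmarg⟩ := hloc
  constructor
  · rintro ⟨G, H, hjoint⟩
    refine ⟨fun t₁ t₂ θ => G t₁ t₂ θ / gY t₂ θ, fun x y => H x y / hY y, fun θ x y => ?_⟩
    rw [hjoint, hmarg, div_mul_div_comm]
  · rintro ⟨g, h, hcond⟩
    refine ⟨fun t₁ t₂ θ => g t₁ t₂ θ * gY t₂ θ, fun x y => h x y * hY y, fun θ x y => ?_⟩
    calc p θ x y = p θ x y / (∑ x', p θ x' y) * ∑ x', p θ x' y :=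
          (div_sum_mul_sum_of_nonneg (hpos θ · y) x).symm
      _ = g (Tx x) (Ty y) θ * h x y * (gY (Ty y) θ * hY y) := by rw [hcond, hmarg]
      _ = g (Tx x) (Ty y) θ * gY (Ty y) θ * (h x y * hY y) := by ring

/-- Theorem 2: assume `T_y(Y)` is locally sufficient for `θ` (Neyman–Fisher factorization of the
marginal `p(y|θ)`). Then `(T_x(X), T_y(Y))` is globally sufficient for `θ` (factorization of the
joint `p(x,y|θ)`) if and only if the conditional pmf `p(x|y,θ) = p(x,y|θ)/p(y|θ)` factors as
`g(T_x(x) | T_y(y), θ) h(x,y)`. -/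
theorem global_sufficiency_iff_conditional_factorization
    {Θ 𝒳 𝒴 T₁ T₂ : Type*} [Fintype 𝒳] [Fintype 𝒴]
    (p : Θ → 𝒳 → 𝒴 → ℝ)
    (hpos : ∀ θ x y, 0 ≤ p θ x y) (hsum : ∀ θ, (∑ x, ∑ y, p θ x y) = 1)
    (Tx : 𝒳 → T₁) (Ty : 𝒴 → T₂)
    (hloc : ∃ (g : T₂ → Θ → ℝ) (h : 𝒴 → ℝ), ∀ θ y, (∑ x, p θ x y) = g (Ty y) θ * h y) :
    (∃ (G : T₁ → T₂ → Θ → ℝ) (H : 𝒳 → 𝒴 → ℝ),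
        ∀ θ x y, p θ x y = G (Tx x) (Ty y) θ * H x y) ↔
      (∃ (g : T₁ → T₂ → Θ → ℝ) (h : 𝒳 → 𝒴 → ℝ),
        ∀ θ x y, p θ x y / (∑ x', p θ x' y) = g (Tx x) (Ty y) θ * h x y) :=
  global_sufficiency_iff_conditional_factorization_general p hpos Tx Ty hloc
end

section
/- Let (Xᵢ,Yᵢ), i=1,…,n be i.i.d. with joint density p(x,y|θ) = 2 on {θ < x < θ+1, θ < y < x} and 0 otherwise. Then the conditional density p(x₁,…,xₙ | y₁,…,yₙ, θ) equals ∏ᵢ 1/(θ+1−yᵢ) on {xᵢ > yᵢ for all i, max_i xᵢ < θ+1}, and consequently M = max_i Xᵢ is a conditionally sufficient statistic for θ given (Y₁,…,Yₙ). -/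
open scoped Classical BigOperators

/-- The joint density `p(x, y | θ)`: equal to `2` on `{θ < x < θ+1, θ < y < x}`, `0` otherwise. -/
noncomputable def fdens (θ x y : ℝ) : ℝ :=
  if θ < x ∧ x < θ + 1 ∧ θ < y ∧ y < x then 2 else 0

/-!
Since `θ < y < x` already forces `θ < x`, the density splits as
`fdens θ x y = 1{x < θ + 1, θ < y} · 2·1{y < x}`. In the product over the sample the first
factors combine to `1{maxᵢ xᵢ < θ + 1, θ < minᵢ yᵢ}`, which sees `x` only through its maximum,
while the second factors do not involve `θ`: this is the conditional factorization. On the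
support the joint density is `2ⁿ`, and dividing by the marginal density `∏ᵢ 2(θ + 1 - yᵢ)` of
`Y` gives the conditional density `∏ᵢ 1/(θ + 1 - yᵢ)`.
-/

theorem fdens_of_mem_support {θ x y : ℝ} (hθy : θ < y) (hyx : y < x) (hx : x < θ + 1) :
    fdens θ x y = 2 :=
  if_pos ⟨hθy.trans hyx, hx, hθy, hyx⟩

theorem fdens_eq_mul (θ x y : ℝ) :
    fdens θ x y = (if x < θ + 1 ∧ θ < y then 1 else 0) * (if y < x then 2 else 0) := by
  unfold fdens
  by_cases hyx : y < x
  · by_cases h : x < θ + 1 ∧ θ < y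
    · simp [h, hyx, h.2.trans hyx]
    · simp only [if_neg h, zero_mul]
      exact if_neg fun h' => h ⟨h'.2.1, h'.2.2.1⟩
  · simp only [if_neg hyx, mul_zero]
    exact if_neg fun h' => hyx h'.2.2.2

theorem prod_fdens_eq_mul {ι : Type*} [Fintype ι] (hι : (Finset.univ : Finset ι).Nonempty)
    (θ : ℝ) (x y : ι → ℝ) :
    ∏ i, fdens θ (x i) (y i) =
      (if Finset.univ.sup' hι x < θ + 1 ∧ θ < Finset.univ.inf' hι y then 1 else 0) *
        ∏ i, (if y i < x i then 2 else 0) := by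
  have hsupport : (∀ i ∈ Finset.univ, x i < θ + 1 ∧ θ < y i) ↔
      Finset.univ.sup' hι x < θ + 1 ∧ θ < Finset.univ.inf' hι y := by
    rw [Finset.sup'_lt_iff, Finset.lt_inf'_iff, forall₂_and]
  simp only [fdens_eq_mul, Finset.prod_mul_distrib, Finset.prod_boole, hsupport]

/-- Example 3: for `(Xᵢ, Yᵢ)` i.i.d. with density `p(x,y|θ) = 2` on `{θ < x < θ+1, θ < y < x}`,
the conditional density `p(x₁,…,xₙ | y₁,…,yₙ, θ)` equals `∏ᵢ 1/(θ+1-yᵢ)` on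
`{yᵢ < xᵢ ∀ i, maxᵢ xᵢ < θ + 1}`, and consequently `M = maxᵢ Xᵢ` is conditionally sufficient
for `θ` given `(Y₁,…,Yₙ)` (conditional Neyman–Fisher factorization of the joint density). -/
theorem max_conditionally_sufficient (n : ℕ) (hn : 0 < n) :
    (∀ (θ : ℝ) (x y : Fin n → ℝ),
        (∀ i, θ < y i ∧ y i < x i) → (∀ i, x i < θ + 1) →
        (∏ i, fdens θ (x i) (y i)) / (∏ i, 2 * (θ + 1 - y i)) =
          ∏ i, 1 / (θ + 1 - y i)) ∧
      (∃ (g : ℝ → (Fin n → ℝ) → ℝ → ℝ) (h : (Fin n → ℝ) → (Fin n → ℝ) → ℝ),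
        ∀ (θ : ℝ) (x y : Fin n → ℝ),
          (∏ i, fdens θ (x i) (y i)) =
            g (Finset.univ.sup' ⟨⟨0, hn⟩, Finset.mem_univ _⟩ x) y θ * h x y) := by
  refine ⟨fun θ x y hy hx => ?_, ?_⟩
  · rw [← Finset.prod_div_distrib]
    refine Finset.prod_congr rfl fun i _ => ?_
    rw [fdens_of_mem_support (hy i).1 (hy i).2 (hx i), div_mul_cancel_left₀ two_ne_zero,
      one_div]
  · exact ⟨fun M y θ => if M < θ + 1 ∧ θ < Finset.univ.inf' ⟨⟨0, hn⟩, Finset.mem_univ _⟩ y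
        then 1 else 0,
      fun x y => ∏ i, (if y i < x i then 2 else 0), prod_fdens_eq_mul _⟩
end
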